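/- If v ≤ Γ on an open ball B with equality on ∂B, where v solves det D²v = g in the Alexandrov sense (Monge–Ampère measure with density g) and Γ is convex continuous, then λ^{2n}(∂Γ(B)) ≤ ∫_B g, i.e. the Lebesgue volume of the subgradient image of Γ over B is bounded by the integral of g over B. -/

import Mathlib

/-!
If `p ∈ ∂Γ(x)` with `x ∈ B`, then `Γ - ⟪p, ·⟫` attains its minimum over `closure B` at `x`.
Take a minimiser `y₀` of `v - ⟪p, ·⟫` over the compact set `closure B`. If `y₀ ∈ B`, then
`p ∈ ∂v(y₀)`. Otherwise `y₀` lies on `∂B`, where `v = Γ`, so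
`v x - ⟪p, x⟫ ≤ Γ x - ⟪p, x⟫ ≤ Γ y₀ - ⟪p, y₀⟫ = v y₀ - ⟪p, y₀⟫`, and `p ∈ ∂v(x)`.
Hence `∂Γ(B) ⊆ ∂v(B)`, and the Alexandrov condition for `A = B` gives the bound.
-/

open Set Metric MeasureTheory

namespace Stmt19

/-- The subgradient set of `w` at `x`, relative to the set `S`. -/
def subgradientSet {m : ℕ} (S : Set (EuclideanSpace ℝ (Fin m)))
    (w : EuclideanSpace ℝ (Fin m) → ℝ) (x : EuclideanSpace ℝ (Fin m)) :
    Set (EuclideanSpace ℝ (Fin m)) :=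
  {p | ∀ y ∈ S, w x + (inner ℝ p (y - x) : ℝ) ≤ w y}

/-- The gradient image `∂w(A)`. -/
def gradientImage {m : ℕ} (S : Set (EuclideanSpace ℝ (Fin m)))
    (w : EuclideanSpace ℝ (Fin m) → ℝ) (A : Set (EuclideanSpace ℝ (Fin m))) :
    Set (EuclideanSpace ℝ (Fin m)) :=
  ⋃ x ∈ A, subgradientSet S w x

variable {m : ℕ} {S U : Set (EuclideanSpace ℝ (Fin m))}
  {u w : EuclideanSpace ℝ (Fin m) → ℝ}

theorem mem_subgradientSet_iff_isMinOn {x p : EuclideanSpace ℝ (Fin m)} :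
    p ∈ subgradientSet S w x ↔ IsMinOn (fun y => w y - inner ℝ p y) S x := by
  simp only [subgradientSet, isMinOn_iff, inner_sub_right]
  exact forall₂_congr fun _ _ => by constructor <;> intro h <;> linarith

theorem mem_gradientImage_iff {A : Set (EuclideanSpace ℝ (Fin m))}
    {p : EuclideanSpace ℝ (Fin m)} :
    p ∈ gradientImage S w A ↔ ∃ x ∈ A, IsMinOn (fun y => w y - inner ℝ p y) S x := by
  simp only [gradientImage, mem_iUnion, exists_prop, mem_subgradientSet_iff_isMinOn]

theorem gradientImage_subset_of_le_of_eqOn_frontier (hU : Bornology.IsBounded U)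
    (hu : ContinuousOn u (closure U)) (hw : ContinuousOn w (closure U))
    (hle : ∀ x ∈ U, u x ≤ w x) (hfrontier : ∀ x ∈ frontier U, u x = w x) :
    gradientImage U w U ⊆ gradientImage U u U := by
  intro p hp
  obtain ⟨x, hxU, hx⟩ := mem_gradientImage_iff.mp hp
  have hinner : Continuous fun y => inner ℝ p y := continuous_const.inner continuous_id
  have hx_closure := isMinOn_iff.mp (hx.closure (hw.sub hinner.continuousOn))
  obtain ⟨y₀, hy₀, hmin⟩ := hU.isCompact_closure.exists_isMinOn ⟨x, subset_closure hxU⟩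
    (hu.sub hinner.continuousOn)
  rw [mem_gradientImage_iff]
  by_cases hy₀U : y₀ ∈ U
  · exact ⟨y₀, hy₀U, hmin.on_subset subset_closure⟩
  refine ⟨x, hxU, isMinOn_iff.mpr fun y hy => ?_⟩
  have hy₀_frontier : y₀ ∈ frontier U :=
    ⟨hy₀, fun h => hy₀U (interior_subset h)⟩
  calc u x - inner ℝ p x
      ≤ w x - inner ℝ p x := by linarith [hle x hxU]
    _ ≤ w y₀ - inner ℝ p y₀ := hx_closure y₀ hy₀
    _ = u y₀ - inner ℝ p y₀ := by rw [hfrontier y₀ hy₀_frontier]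
    _ ≤ u y - inner ℝ p y := isMinOn_iff.mp hmin y (subset_closure hy)

theorem volume_gradientImage_le_integral_general (m : ℕ)
    (c : EuclideanSpace ℝ (Fin m)) (r : ℝ) (hr : 0 < r)
    (v Γ : EuclideanSpace ℝ (Fin m) → ℝ)
    (hvc : ContinuousOn v (closedBall c r)) (hΓc : ContinuousOn Γ (closedBall c r))
    (hle : ∀ x ∈ ball c r, v x ≤ Γ x)
    (hbdry : ∀ x ∈ sphere c r, v x = Γ x)
    (g : EuclideanSpace ℝ (Fin m) → ℝ)
    (halex : ∀ A ⊆ ball c r, MeasurableSet A →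
      volume (gradientImage (ball c r) v A) = ∫⁻ x in A, ENNReal.ofReal (g x)) :
    volume (gradientImage (ball c r) Γ (ball c r))
      ≤ ∫⁻ x in ball c r, ENNReal.ofReal (g x) := by
  rw [← halex (ball c r) subset_rfl measurableSet_ball]
  refine measure_mono (gradientImage_subset_of_le_of_eqOn_frontier isBounded_ball ?_ ?_ hle ?_)
  · rwa [closure_ball c hr.ne']
  · rwa [closure_ball c hr.ne']
  · rwa [frontier_ball c hr.ne']

/-- if `v ≤ Γ` on an open ball `B` with equality on `∂B`, where `v`
solves `det D²v = g` in the Alexandrov sense and `Γ` is convex continuous, then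
`λ(∂Γ(B)) ≤ ∫_B g`. -/
theorem volume_gradientImage_le_integral (m : ℕ)
    (c : EuclideanSpace ℝ (Fin m)) (r : ℝ) (hr : 0 < r)
    (v Γ : EuclideanSpace ℝ (Fin m) → ℝ)
    (hvc : ContinuousOn v (closedBall c r)) (hΓc : ContinuousOn Γ (closedBall c r))
    (hvconv : ConvexOn ℝ (closedBall c r) v) (hΓconv : ConvexOn ℝ (closedBall c r) Γ)
    (hle : ∀ x ∈ ball c r, v x ≤ Γ x)
    (hbdry : ∀ x ∈ sphere c r, v x = Γ x)
    (g : EuclideanSpace ℝ (Fin m) → ℝ) (hg : 0 ≤ g)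
    (hgint : IntegrableOn g (ball c r) volume)
    (halex : ∀ A ⊆ ball c r, MeasurableSet A →
      volume (gradientImage (ball c r) v A) = ∫⁻ x in A, ENNReal.ofReal (g x)) :
    volume (gradientImage (ball c r) Γ (ball c r))
      ≤ ∫⁻ x in ball c r, ENNReal.ofReal (g x) :=
  volume_gradientImage_le_integral_general m c r hr v Γ hvc hΓc hle hbdry g halex

end Stmt19
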